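/- arXiv:1801.04537 — 2 statements merged into one kernel-verified Lean document; each statement's English description precedes it below -/
import Mathlib

section
/- Fix a query index (a1*, a2*, b*). Let (a1^1, a2, b) ≠ (a1^2, a2, b) with b ≠ b* and a1^1 ≠ a1^2 index two columns of S^m, and let s1, s2 be the corresponding columns of the collapsed matrix S^m_q obtained by deleting all rows in R* = {(u1, u2) : u1 (P b*) + u2 = a2*}. Then ‖s1‖₂² = ‖s2‖₂² = (2^m − 1)/2^m and |⟨s1, s2⟩| = 2^{-m}, so that |⟨s1, s2⟩| / (‖s1‖₂ ‖s2‖₂) = 1/(2^m − 1). -/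
/-!
Column `(a1, a2, b)` of `S^m` is supported on the `2^m` rows `(u1, a2 + u1 P_b)`, where it equals
`2^{-m/2} χ(⟨u1, a1⟩)` with `χ(x) = (-1)^x`. Exactly one of these rows lies in `R*`: the one whose
`u1 = u1*` solves `u1 (P_{b*} + P_b) = a2* + a2`, which is uniquely solvable since `P_{b*} + P_b`
is invertible. Hence the inner product of the collapsed columns for `a1, a1'` is
`2^{-m} (∑_{u1} χ(⟨u1, a1 + a1'⟩) - χ(⟨u1*, a1 + a1'⟩))`, and the character sum is `2^m` if
`a1 = a1'` and `0` otherwise.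
-/

/-- Binary vectors of length `m`. -/
abbrev BV (m : ℕ) := Fin m → ZMod 2

/-- Row indices of the sparse Kerdock matrix: pairs `(u1, u2)`. -/
abbrev KRow (m : ℕ) := BV m × BV m

/-- Column indices of the sparse Kerdock matrix: triples `(a1, a2, b)`. -/
abbrev KCol (m : ℕ) := BV m × BV m × BV m

/-- `P` is a Kerdock set: a family of symmetric binary matrices such that the sum of
any two distinct members is invertible. -/
def IsKerdockSet {m : ℕ} (P : BV m → Matrix (Fin m) (Fin m) (ZMod 2)) : Prop :=
  (∀ b, (P b).IsSymm) ∧ ∀ b b', b ≠ b' → IsUnit (P b + P b')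

/-- Entry of the sparse Kerdock matrix `S^m` at row `(u1, u2)` and column `(a1, a2, b)`:
`2^{-m/2} * (-1)^{⟨u1, a1⟩}` if `u1 (P b) + u2 = a2`, and `0` otherwise. -/
noncomputable def kerdockEntry (m : ℕ) (P : BV m → Matrix (Fin m) (Fin m) (ZMod 2))
    (u : KRow m) (c : KCol m) : ℝ :=
  if Matrix.vecMul u.1 (P c.2.2) + u.2 = c.2.1 then
    (Real.sqrt (2 ^ m))⁻¹ * (-1 : ℝ) ^ ((∑ i, u.1 i * c.1 i).val)
  else 0

open Matrix Finset

def signChar : AddChar (ZMod 2) ℝ where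
  toFun x := (-1) ^ x.val
  map_zero_eq_one' := by simp
  map_add_eq_mul' x y := by
    rw [ZMod.val_add, ← neg_one_pow_eq_pow_mod_two, pow_add]

lemma signChar_apply (x : ZMod 2) : signChar x = (-1) ^ x.val := rfl

lemma abs_signChar (x : ZMod 2) : |signChar x| = 1 := by
  simp [signChar_apply]

lemma sum_signChar_dotProduct_eq_zero {ι : Type*} [Fintype ι] [DecidableEq ι]
    {d : ι → ZMod 2} (hd : d ≠ 0) : ∑ u : ι → ZMod 2, signChar (u ⬝ᵥ d) = 0 := by
  obtain ⟨i, hi⟩ := Function.ne_iff.1 hd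
  have hdi : d i = 1 := by
    generalize d i = x at hi
    revert x; simp only [Pi.zero_apply]; decide
  let ψ := signChar.compAddMonoidHom (AddMonoidHom.mk' (· ⬝ᵥ d) (add_dotProduct · · d))
  refine AddChar.sum_eq_zero_of_ne_one (ψ := ψ) (AddChar.ne_one_iff.2 ⟨Pi.single i 1, ?_⟩)
  norm_num [ψ, single_dotProduct, hdi, signChar_apply, ZMod.val_one]

lemma sum_filter_ite_add_eq {α β M : Type*} [Fintype α] [Fintype β] [AddCommGroup β]
    [DecidableEq β] [AddCommMonoid M] (p : α × β → Prop) [DecidablePred p] (f : α → β) (c : β)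
    (g : α → M) :
    ∑ u ∈ univ.filter p, (if f u.1 + u.2 = c then g u.1 else 0)
      = ∑ x ∈ univ.filter (fun x => p (x, c - f x)), g x := by
  rw [sum_filter, Fintype.sum_prod_type, sum_filter]
  refine Fintype.sum_congr _ _ fun x => ?_
  rw [Fintype.sum_eq_single (c - f x) fun y hy => ?_]
  · simp
  · simp [← eq_sub_iff_add_eq', hy]

lemma vecMul_add_sub_eq_iff {ι : Type*} [Fintype ι] (x y z : ι → ZMod 2)
    (A B : Matrix ι ι (ZMod 2)) : x ᵥ* A + (y - x ᵥ* B) = z ↔ x ᵥ* (A + B) = z + y := by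
  rw [← sub_eq_zero, show x ᵥ* A + (y - x ᵥ* B) - z = x ᵥ* (A - B) - (z - y) by
    rw [vecMul_sub]; abel, sub_eq_zero, ZModModule.sub_eq_add, ZModModule.sub_eq_add]

section Kerdock

variable {m : ℕ} (P : BV m → Matrix (Fin m) (Fin m) (ZMod 2))

/-- `⟨s, s'⟩` for the columns `s, s'` of `S^m_q` obtained from the columns `c, c'` of `S^m`. -/
noncomputable def collapsedInner (a2s bs : BV m) (c c' : KCol m) : ℝ :=
  ∑ u ∈ univ.filter (fun u : KRow m => u.1 ᵥ* P bs + u.2 ≠ a2s),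
    kerdockEntry m P u c * kerdockEntry m P u c'

lemma kerdockEntry_mul_kerdockEntry (u : KRow m) (a1 a1' a2 b : BV m) :
    kerdockEntry m P u (a1, a2, b) * kerdockEntry m P u (a1', a2, b)
      = if u.1 ᵥ* P b + u.2 = a2 then (2 ^ m)⁻¹ * signChar (u.1 ⬝ᵥ (a1 + a1')) else 0 := by
  unfold kerdockEntry
  split_ifs
  · rw [dotProduct_add, AddChar.map_add_eq_mul, mul_mul_mul_comm, ← sq, inv_pow,
      Real.sq_sqrt (by positivity)]
    rfl
  · simp

lemma collapsedInner_eq {a2s bs b : BV m} (hQ : IsUnit (P bs + P b)) (a1 a1' a2 : BV m) :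
    ∃ u1s : BV m, collapsedInner P a2s bs (a1, a2, b) (a1', a2, b)
      = (2 ^ m)⁻¹ * (∑ u1, signChar (u1 ⬝ᵥ (a1 + a1')) - signChar (u1s ⬝ᵥ (a1 + a1'))) := by
  obtain ⟨u1s, hu1s⟩ := vecMul_surjective_iff_isUnit.2 hQ (a2s + a2)
  refine ⟨u1s, ?_⟩
  have hdeleted (x : BV m) : x ᵥ* P bs + (a2 - x ᵥ* P b) = a2s ↔ x = u1s := by
    rw [vecMul_add_sub_eq_iff, ← hu1s, (vecMul_injective_of_isUnit hQ).eq_iff]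
  unfold collapsedInner
  simp_rw [kerdockEntry_mul_kerdockEntry]
  refine (sum_filter_ite_add_eq (fun u : KRow m => u.1 ᵥ* P bs + u.2 ≠ a2s) (· ᵥ* P b) a2
    fun x => (2 ^ m)⁻¹ * signChar (x ⬝ᵥ (a1 + a1'))).trans ?_
  rw [filter_congr fun x _ => (hdeleted x).not, filter_ne',
    sum_erase_eq_sub (mem_univ _), ← mul_sum, ← mul_sub]

lemma collapsedInner_self {a2s bs b : BV m} (hQ : IsUnit (P bs + P b)) (a1 a2 : BV m) :
    collapsedInner P a2s bs (a1, a2, b) (a1, a2, b) = (2 ^ m - 1) / 2 ^ m := by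
  obtain ⟨u1s, h⟩ := collapsedInner_eq P hQ a1 a1 a2
  rw [h, ZModModule.add_self]
  simp only [dotProduct_zero, AddChar.map_zero_eq_one, sum_const, card_univ, Fintype.card_fun,
    ZMod.card, Fintype.card_fin, nsmul_eq_mul, mul_one]
  push_cast
  field_simp

lemma abs_collapsedInner_of_ne {a2s bs b : BV m} (hQ : IsUnit (P bs + P b)) {a1 a1' : BV m}
    (a2 : BV m) (ha : a1 ≠ a1') :
    |collapsedInner P a2s bs (a1, a2, b) (a1', a2, b)| = (2 ^ m)⁻¹ := by
  obtain ⟨u1s, h⟩ := collapsedInner_eq P hQ a1 a1' a2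
  have hd : a1 + a1' ≠ 0 := by rwa [Ne, ← ZModModule.sub_eq_add, sub_eq_zero]
  rw [h, sum_signChar_dotProduct_eq_zero hd, zero_sub, abs_mul, abs_neg, abs_signChar, mul_one,
    abs_of_pos (by positivity)]

end Kerdock

theorem sparse_kerdock_collapsed_orthogonal_pair_general (m : ℕ)
    (P : BV m → Matrix (Fin m) (Fin m) (ZMod 2)) (hP : IsKerdockSet P)
    (a2s bs : BV m) (a11 a12 a2 b : BV m) (hb : b ≠ bs) (ha : a11 ≠ a12) :
    (∑ u ∈ Finset.univ.filter (fun u : KRow m => Matrix.vecMul u.1 (P bs) + u.2 ≠ a2s),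
        (kerdockEntry m P u (a11, a2, b)) ^ 2 = ((2 : ℝ) ^ m - 1) / 2 ^ m) ∧
    (∑ u ∈ Finset.univ.filter (fun u : KRow m => Matrix.vecMul u.1 (P bs) + u.2 ≠ a2s),
        (kerdockEntry m P u (a12, a2, b)) ^ 2 = ((2 : ℝ) ^ m - 1) / 2 ^ m) ∧
    |∑ u ∈ Finset.univ.filter (fun u : KRow m => Matrix.vecMul u.1 (P bs) + u.2 ≠ a2s),
        kerdockEntry m P u (a11, a2, b) * kerdockEntry m P u (a12, a2, b)|
      = ((2 : ℝ) ^ m)⁻¹ ∧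
    |∑ u ∈ Finset.univ.filter (fun u : KRow m => Matrix.vecMul u.1 (P bs) + u.2 ≠ a2s),
        kerdockEntry m P u (a11, a2, b) * kerdockEntry m P u (a12, a2, b)| /
      (Real.sqrt (∑ u ∈ Finset.univ.filter
          (fun u : KRow m => Matrix.vecMul u.1 (P bs) + u.2 ≠ a2s),
          (kerdockEntry m P u (a11, a2, b)) ^ 2) *
        Real.sqrt (∑ u ∈ Finset.univ.filter
          (fun u : KRow m => Matrix.vecMul u.1 (P bs) + u.2 ≠ a2s),
          (kerdockEntry m P u (a12, a2, b)) ^ 2))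
      = 1 / ((2 : ℝ) ^ m - 1) := by
  have hQ : IsUnit (P bs + P b) := hP.2 bs b hb.symm
  have hnorm (a1 : BV m) :
      ∑ u ∈ Finset.univ.filter (fun u : KRow m => Matrix.vecMul u.1 (P bs) + u.2 ≠ a2s),
        (kerdockEntry m P u (a1, a2, b)) ^ 2 = ((2 : ℝ) ^ m - 1) / 2 ^ m := by
    simpa only [collapsedInner, sq] using collapsedInner_self P (a2s := a2s) hQ a1 a2
  have hinner := abs_collapsedInner_of_ne P (a2s := a2s) hQ a2 ha
  unfold collapsedInner at hinner
  refine ⟨hnorm a11, hnorm a12, hinner, ?_⟩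
  have hnonneg : (0 : ℝ) ≤ (2 ^ m - 1) / 2 ^ m :=
    div_nonneg (sub_nonneg.2 (one_le_pow₀ one_le_two)) (by positivity)
  rw [hnorm, hnorm, hinner, Real.mul_self_sqrt hnonneg, div_div_eq_mul_div,
    inv_mul_cancel₀ (by positivity)]

/-- For two distinct columns of `S^m` sharing the same `a2` and `b` with `b ≠ b*`, the
corresponding collapsed columns `s1, s2` satisfy
`‖s1‖² = ‖s2‖² = (2^m − 1)/2^m`, `|⟨s1, s2⟩| = 2^{-m}`, and hence the normalized inner
product equals `1/(2^m − 1)`. -/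
theorem sparse_kerdock_collapsed_orthogonal_pair (m : ℕ) (hm : 1 ≤ m)
    (P : BV m → Matrix (Fin m) (Fin m) (ZMod 2)) (hP : IsKerdockSet P)
    (a1s a2s bs : BV m) (a11 a12 a2 b : BV m) (hb : b ≠ bs) (ha : a11 ≠ a12) :
    (∑ u ∈ Finset.univ.filter (fun u : KRow m => Matrix.vecMul u.1 (P bs) + u.2 ≠ a2s),
        (kerdockEntry m P u (a11, a2, b)) ^ 2 = ((2 : ℝ) ^ m - 1) / 2 ^ m) ∧
    (∑ u ∈ Finset.univ.filter (fun u : KRow m => Matrix.vecMul u.1 (P bs) + u.2 ≠ a2s),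
        (kerdockEntry m P u (a12, a2, b)) ^ 2 = ((2 : ℝ) ^ m - 1) / 2 ^ m) ∧
    |∑ u ∈ Finset.univ.filter (fun u : KRow m => Matrix.vecMul u.1 (P bs) + u.2 ≠ a2s),
        kerdockEntry m P u (a11, a2, b) * kerdockEntry m P u (a12, a2, b)|
      = ((2 : ℝ) ^ m)⁻¹ ∧
    |∑ u ∈ Finset.univ.filter (fun u : KRow m => Matrix.vecMul u.1 (P bs) + u.2 ≠ a2s),
        kerdockEntry m P u (a11, a2, b) * kerdockEntry m P u (a12, a2, b)| /
      (Real.sqrt (∑ u ∈ Finset.univ.filter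
          (fun u : KRow m => Matrix.vecMul u.1 (P bs) + u.2 ≠ a2s),
          (kerdockEntry m P u (a11, a2, b)) ^ 2) *
        Real.sqrt (∑ u ∈ Finset.univ.filter
          (fun u : KRow m => Matrix.vecMul u.1 (P bs) + u.2 ≠ a2s),
          (kerdockEntry m P u (a12, a2, b)) ^ 2))
      = 1 / ((2 : ℝ) ^ m - 1) :=
  sparse_kerdock_collapsed_orthogonal_pair_general m P hP a2s bs a11 a12 a2 b hb ha
end

section
/- Fix a query index (a1*, a2*, b*), and let S^m_q be the collapsed codebook matrix obtained from S^m by deleting the rows in R* = {(u1, u2) : u1 (P b*) + u2 = a2*} and the columns indexed by (a1, a2*, b*) for all a1. Then for any two distinct remaining columns s1, s2 of S^m_q, the normalized inner product |⟨s1, s2⟩| / (‖s1‖₂ ‖s2‖₂) is at most 1/(2^m − 1), and this bound is attained by some pair of distinct remaining columns; that is, the coherence of S^m_q equals 1/(2^m − 1) = 2/(√(4p+1) − 1) where p = 2^{2m} − 2^m is its number of rows. -/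
section Aux

variable {m : ℕ}

lemma zmod2_em (x : ZMod 2) : x = 0 ∨ x = 1 := by revert x; decide

/-- The real character `(-1)^{⟨u,a⟩}`. -/
noncomputable def chi (u a : BV m) : ℝ := (-1 : ℝ) ^ ((∑ i, u i * a i).val)

lemma neg_one_pow_mod_two (n : ℕ) : (-1 : ℝ) ^ (n % 2) = (-1) ^ n := by
  conv_rhs => rw [← Nat.div_add_mod n 2]
  rw [pow_add, pow_mul]
  norm_num

lemma neg_one_pow_val_add (x y : ZMod 2) :
    (-1 : ℝ) ^ ((x + y).val) = (-1 : ℝ) ^ x.val * (-1 : ℝ) ^ y.val := by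
  rw [ZMod.val_add, neg_one_pow_mod_two, pow_add]

lemma neg_one_pow_val_add_one (x : ZMod 2) :
    (-1 : ℝ) ^ ((x + 1).val) = -((-1 : ℝ) ^ x.val) := by
  rw [neg_one_pow_val_add]
  norm_num [ZMod.val_one]

lemma chi_mul (u a a' : BV m) : chi u a * chi u a' = chi u (a + a') := by
  unfold chi
  rw [← neg_one_pow_val_add]
  congr 2
  rw [← Finset.sum_add_distrib]
  exact Finset.sum_congr rfl fun i _ => by rw [Pi.add_apply, mul_add]

lemma chi_self (u a : BV m) : chi u a * chi u a = 1 := by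
  unfold chi
  rw [← pow_add, ← two_mul, pow_mul]
  norm_num

lemma abs_chi (u a : BV m) : |chi u a| = 1 := by
  unfold chi
  rw [abs_pow, abs_neg, abs_one, one_pow]

lemma sum_chi {d : BV m} (hd : d ≠ 0) : ∑ u : BV m, chi u d = 0 := by
  obtain ⟨i, hi⟩ : ∃ i, d i ≠ 0 := by
    by_contra h
    push_neg at h
    exact hd (funext h)
  have hdi : d i = 1 := (zmod2_em (d i)).resolve_left hi
  set e : BV m := fun j => if j = i then 1 else 0 with he
  have key : ∀ u : BV m, chi (u + e) d = - chi u d := by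
    intro u
    have hsum : (∑ j, (u + e) j * d j) = (∑ j, u j * d j) + 1 := by
      have h1 : ∀ j ∈ Finset.univ, (u + e) j * d j = u j * d j + (if j = i then d j else 0) := by
        intro j _
        rw [Pi.add_apply, add_mul, he]
        by_cases hj : j = i <;> simp [hj]
      rw [Finset.sum_congr rfl h1, Finset.sum_add_distrib,
        Finset.sum_ite_eq' Finset.univ i (fun j => d j)]
      simp [hdi]
    unfold chi
    rw [hsum, neg_one_pow_val_add_one]
  have h2 : (∑ u : BV m, chi (u + e) d) = ∑ u : BV m, chi u d :=
    Fintype.sum_equiv (Equiv.addRight e) _ _ (fun u => rfl)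
  have h3 : (∑ u : BV m, chi (u + e) d) = - ∑ u : BV m, chi u d := by
    rw [← Finset.sum_neg_distrib]
    exact Finset.sum_congr rfl fun u _ => key u
  have := h2.symm.trans h3
  linarith

lemma vecMul_eq_iff {M : Matrix (Fin m) (Fin m) (ZMod 2)} (h : IsUnit M) (w u : BV m) :
    Matrix.vecMul u M = w ↔ u = Matrix.vecMul w M⁻¹ := by
  have hdet := (Matrix.isUnit_iff_isUnit_det M).mp h
  constructor
  · rintro rfl
    rw [Matrix.vecMul_vecMul, Matrix.mul_nonsing_inv _ hdet, Matrix.vecMul_one]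
  · rintro rfl
    rw [Matrix.vecMul_vecMul, Matrix.nonsing_inv_mul _ hdet, Matrix.vecMul_one]

lemma matrix_sub_eq_add (A B : Matrix (Fin m) (Fin m) (ZMod 2)) : A - B = A + B := by
  ext i j
  simp [sub_eq_add_neg, CharTwo.neg_eq]

lemma bv_eq_iff_add_eq_zero (a b : BV m) : a + b = 0 ↔ a = b := by
  constructor
  · intro h
    funext i
    have := congrFun h i
    simp only [Pi.add_apply, Pi.zero_apply] at this
    rcases zmod2_em (a i) with h1 | h1 <;> rcases zmod2_em (b i) with h2 | h2 <;>
      rw [h1, h2] <;> rw [h1, h2] at this <;> first | rfl | simp_all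
  · rintro rfl
    funext i
    simp only [Pi.add_apply, Pi.zero_apply]
    rcases zmod2_em (a i) with h1 | h1 <;> rw [h1] <;> decide

/-- The forced value of `u2` on the support of column `c`. -/
def vv (P : BV m → Matrix (Fin m) (Fin m) (ZMod 2)) (c : KCol m) (u1 : BV m) : BV m :=
  c.2.1 - Matrix.vecMul u1 (P c.2.2)

lemma entry_eq (P : BV m → Matrix (Fin m) (Fin m) (ZMod 2)) (u : KRow m) (c : KCol m) :
    kerdockEntry m P u c =
      if u.2 = vv P c u.1 then (Real.sqrt (2 ^ m))⁻¹ * chi u.1 c.1 else 0 := by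
  have hc : (Matrix.vecMul u.1 (P c.2.2) + u.2 = c.2.1) ↔ (u.2 = vv P c u.1) := by
    unfold vv
    rw [eq_sub_iff_add_eq, add_comm]
  rw [kerdockEntry, if_congr hc rfl rfl]
  rfl

/-- The index set of the reduced sum. -/
def TT (P : BV m → Matrix (Fin m) (Fin m) (ZMod 2)) (a2s bs : BV m) (c c' : KCol m) :
    Finset (BV m) :=
  Finset.univ.filter
    (fun u1 => vv P c u1 = vv P c' u1 ∧ Matrix.vecMul u1 (P bs) + vv P c u1 ≠ a2s)

lemma sum_reduce (P : BV m → Matrix (Fin m) (Fin m) (ZMod 2)) (a2s bs : BV m)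
    (c c' : KCol m) :
    (∑ u ∈ Finset.univ.filter (fun u : KRow m => Matrix.vecMul u.1 (P bs) + u.2 ≠ a2s),
        kerdockEntry m P u c * kerdockEntry m P u c')
      = ((2 : ℝ) ^ m)⁻¹ * ∑ u1 ∈ TT P a2s bs c c', chi u1 c.1 * chi u1 c'.1 := by
  have hε : (Real.sqrt (2 ^ m))⁻¹ * (Real.sqrt (2 ^ m))⁻¹ = ((2 : ℝ) ^ m)⁻¹ := by
    rw [← mul_inv, Real.mul_self_sqrt (by positivity)]
  rw [Finset.sum_filter, Fintype.sum_prod_type]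
  have step : ∀ u1 : BV m,
      (∑ u2 : BV m, if Matrix.vecMul u1 (P bs) + u2 ≠ a2s then
        kerdockEntry m P (u1, u2) c * kerdockEntry m P (u1, u2) c' else 0)
      = if vv P c u1 = vv P c' u1 ∧ Matrix.vecMul u1 (P bs) + vv P c u1 ≠ a2s then
          ((2 : ℝ) ^ m)⁻¹ * (chi u1 c.1 * chi u1 c'.1) else 0 := by
    intro u1
    rw [Finset.sum_eq_single (vv P c u1)]
    · rw [entry_eq, entry_eq]
      simp only
      by_cases h1 : vv P c u1 = vv P c' u1
      · by_cases h2 : Matrix.vecMul u1 (P bs) + vv P c u1 ≠ a2s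
        · rw [if_pos h2, if_pos trivial, if_pos h1, if_pos (⟨h1, h2⟩ : _ ∧ _)]
          linear_combination (chi u1 c.1 * chi u1 c'.1) * hε
        · rw [if_neg h2, if_neg (fun hh : _ ∧ _ => h2 hh.2)]
      · rw [if_neg (fun hh : _ ∧ _ => h1 hh.1)]
        by_cases h2 : Matrix.vecMul u1 (P bs) + vv P c u1 ≠ a2s
        · rw [if_pos h2, if_neg h1, mul_zero]
        · rw [if_neg h2]
    · intro u2 _ hne
      rw [entry_eq, entry_eq]
      simp only
      rw [if_neg hne, zero_mul, ite_self]
    · intro h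
      exact absurd (Finset.mem_univ _) h
  rw [Finset.sum_congr rfl fun u1 _ => step u1, ← Finset.sum_filter, ← TT, Finset.mul_sum]

lemma TT_self_bs (P : BV m → Matrix (Fin m) (Fin m) (ZMod 2)) (a2s bs : BV m)
    {c c' : KCol m} (hcc : c.2 = c'.2) (hb : c.2.2 = bs) (ha : c.2.1 ≠ a2s) :
    TT P a2s bs c c' = Finset.univ := by
  have hvv : vv P c = vv P c' := by
    funext u1
    unfold vv
    rw [hcc]
  ext u1
  simp only [TT, Finset.mem_filter, Finset.mem_univ, true_and, iff_true]
  refine ⟨congrFun hvv u1, ?_⟩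
  unfold vv
  rw [hb]
  intro heq
  apply ha
  calc c.2.1 = Matrix.vecMul u1 (P bs) + (c.2.1 - Matrix.vecMul u1 (P bs)) := by ring
    _ = a2s := heq

lemma TT_self_ne (P : BV m → Matrix (Fin m) (Fin m) (ZMod 2))
    (hP : IsKerdockSet P) (a2s bs : BV m)
    {c c' : KCol m} (hcc : c.2 = c'.2) (hb : c.2.2 ≠ bs) :
    TT P a2s bs c c'
      = Finset.univ.erase (Matrix.vecMul (a2s - c.2.1) (P bs - P c.2.2)⁻¹) := by
  have hvv : vv P c = vv P c' := by
    funext u1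
    unfold vv
    rw [hcc]
  have hU : IsUnit (P bs - P c.2.2) := by
    rw [matrix_sub_eq_add]
    exact hP.2 bs c.2.2 (Ne.symm hb)
  ext u1
  simp only [TT, Finset.mem_filter, Finset.mem_univ, true_and, Finset.mem_erase, and_true]
  have h1 : (Matrix.vecMul u1 (P bs) + vv P c u1 = a2s)
      ↔ u1 = Matrix.vecMul (a2s - c.2.1) (P bs - P c.2.2)⁻¹ := by
    rw [← vecMul_eq_iff hU]
    unfold vv
    rw [Matrix.vecMul_sub]
    constructor <;> intro h <;> linear_combination h
  constructor
  · rintro ⟨-, h⟩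
    exact fun heq => h (h1.mpr heq)
  · intro h
    exact ⟨congrFun hvv u1, fun heq => h (h1.mp heq)⟩

lemma TT_diag_empty (P : BV m → Matrix (Fin m) (Fin m) (ZMod 2)) (a2s bs : BV m)
    {c c' : KCol m} (hb : c.2.2 = c'.2.2) (ha : c.2.1 ≠ c'.2.1) :
    TT P a2s bs c c' = ∅ := by
  ext u1
  simp only [TT, Finset.mem_filter, Finset.mem_univ, true_and, Finset.notMem_empty,
    iff_false, not_and]
  intro h
  exfalso
  apply ha
  unfold vv at h
  rw [hb] at h
  linear_combination h

end Aux

section Main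

variable {m : ℕ}

lemma card_BV (m : ℕ) : Fintype.card (BV m) = 2 ^ m := by
  simp [BV]

/-- Value of the collapsed column norm squared. -/
lemma norm_sum_val (P : BV m → Matrix (Fin m) (Fin m) (ZMod 2)) (hP : IsKerdockSet P)
    (a2s bs : BV m) (c : KCol m) (hc : ¬(c.2.1 = a2s ∧ c.2.2 = bs)) :
    (∑ u ∈ Finset.univ.filter (fun u : KRow m => Matrix.vecMul u.1 (P bs) + u.2 ≠ a2s),
        (kerdockEntry m P u c) ^ 2)
      = if c.2.2 = bs then 1 else ((2 : ℝ) ^ m - 1) / 2 ^ m := by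
  have h1 : (∑ u ∈ Finset.univ.filter (fun u : KRow m => Matrix.vecMul u.1 (P bs) + u.2 ≠ a2s),
        (kerdockEntry m P u c) ^ 2)
      = ∑ u ∈ Finset.univ.filter (fun u : KRow m => Matrix.vecMul u.1 (P bs) + u.2 ≠ a2s),
        kerdockEntry m P u c * kerdockEntry m P u c :=
    Finset.sum_congr rfl fun u _ => pow_two _
  rw [h1, sum_reduce]
  have h2 : (∑ u1 ∈ TT P a2s bs c c, chi u1 c.1 * chi u1 c.1)
      = ((TT P a2s bs c c).card : ℝ) := by
    rw [Finset.sum_congr rfl fun u1 _ => chi_self u1 c.1, Finset.sum_const, nsmul_eq_mul,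
      mul_one]
  rw [h2]
  by_cases hb : c.2.2 = bs
  · have ha : c.2.1 ≠ a2s := fun h => hc ⟨h, hb⟩
    rw [TT_self_bs P a2s bs rfl hb ha, if_pos hb, Finset.card_univ, card_BV]
    rw [Nat.cast_pow, Nat.cast_ofNat]
    field_simp
  · rw [TT_self_ne P hP a2s bs rfl hb, if_neg hb,
      Finset.card_erase_of_mem (Finset.mem_univ _), Finset.card_univ, card_BV]
    have h3 : 1 ≤ 2 ^ m := Nat.one_le_two_pow
    rw [Nat.cast_sub h3]
    push_cast
    have h2m : (0:ℝ) < 2 ^ m := by positivity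
    field_simp

/-- Exact value of the reduced inner sum for the "same pair, different `a1`" case. -/
lemma inner_exact (P : BV m → Matrix (Fin m) (Fin m) (ZMod 2)) (hP : IsKerdockSet P)
    (a2s bs : BV m) {c c' : KCol m} (hcc : c.2 = c'.2) (hb : c.2.2 ≠ bs)
    (ha1 : c.1 ≠ c'.1) :
    |∑ u1 ∈ TT P a2s bs c c', chi u1 c.1 * chi u1 c'.1| = 1 := by
  have hd : c.1 + c'.1 ≠ 0 := fun h => ha1 ((bv_eq_iff_add_eq_zero _ _).mp h)
  have hrw : ∀ u1 ∈ TT P a2s bs c c', chi u1 c.1 * chi u1 c'.1 = chi u1 (c.1 + c'.1) :=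
    fun u1 _ => chi_mul u1 c.1 c'.1
  rw [Finset.sum_congr rfl hrw, TT_self_ne P hP a2s bs hcc hb,
    Finset.sum_erase_eq_sub (Finset.mem_univ _), sum_chi hd, zero_sub, abs_neg, abs_chi]

/-- Upper bound on the reduced inner sum, all off-diagonal cases. -/
lemma inner_bound (P : BV m → Matrix (Fin m) (Fin m) (ZMod 2)) (hP : IsKerdockSet P)
    (a2s bs : BV m) {c c' : KCol m} (hne : c ≠ c')
    (hc : ¬(c.2.1 = a2s ∧ c.2.2 = bs)) :
    |∑ u1 ∈ TT P a2s bs c c', chi u1 c.1 * chi u1 c'.1| ≤ 1 := by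
  by_cases hbb : c.2.2 = c'.2.2
  · by_cases haa : c.2.1 = c'.2.1
    · have hcc : c.2 = c'.2 := Prod.ext haa hbb
      have ha1 : c.1 ≠ c'.1 := by
        intro h
        exact hne (Prod.ext h hcc)
      by_cases hb : c.2.2 = bs
      · -- no rows deleted, full character sum is 0
        have ha : c.2.1 ≠ a2s := fun h => hc ⟨h, hb⟩
        have hd : c.1 + c'.1 ≠ 0 := fun h => ha1 ((bv_eq_iff_add_eq_zero _ _).mp h)
        have hrw : ∀ u1 ∈ TT P a2s bs c c', chi u1 c.1 * chi u1 c'.1 = chi u1 (c.1 + c'.1) :=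
          fun u1 _ => chi_mul u1 c.1 c'.1
        rw [Finset.sum_congr rfl hrw, TT_self_bs P a2s bs hcc hb ha, sum_chi hd]
        norm_num
      · exact le_of_eq (inner_exact P hP a2s bs hcc hb ha1)
    · rw [TT_diag_empty P a2s bs hbb haa, Finset.sum_empty]
      norm_num
  · -- different `b`: at most one common support point
    have hU : IsUnit (P c'.2.2 - P c.2.2) := by
      rw [matrix_sub_eq_add]
      exact hP.2 c'.2.2 c.2.2 (Ne.symm hbb)
    set u0 : BV m := Matrix.vecMul (c'.2.1 - c.2.1) (P c'.2.2 - P c.2.2)⁻¹ with hu0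
    have hsub : TT P a2s bs c c' ⊆ {u0} := by
      intro x hx
      simp only [TT, Finset.mem_filter, Finset.mem_univ, true_and] at hx
      have h1 : Matrix.vecMul x (P c'.2.2 - P c.2.2) = c'.2.1 - c.2.1 := by
        unfold vv at hx
        rw [Matrix.vecMul_sub]
        linear_combination hx.1
      rw [Finset.mem_singleton, hu0]
      exact (vecMul_eq_iff hU _ _).mp h1
    calc |∑ u1 ∈ TT P a2s bs c c', chi u1 c.1 * chi u1 c'.1|
        ≤ ∑ u1 ∈ TT P a2s bs c c', |chi u1 c.1 * chi u1 c'.1| :=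
          Finset.abs_sum_le_sum_abs _ _
      _ = ∑ u1 ∈ TT P a2s bs c c', 1 := by
          refine Finset.sum_congr rfl fun u1 _ => ?_
          rw [abs_mul, abs_chi, abs_chi, mul_one]
      _ = ((TT P a2s bs c c').card : ℝ) := by rw [Finset.sum_const, nsmul_eq_mul, mul_one]
      _ ≤ 1 := by
          have := Finset.card_le_card hsub
          simp only [Finset.card_singleton] at this
          exact_mod_cast this

end Main

/-- The coherence of the collapsed codebook matrix `S^m_q` equals
`1/(2^m − 1) = 2/(√(4p+1) − 1)` where `p = 2^{2m} − 2^m` is its number of rows. -/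
theorem sparse_kerdock_collapsed_coherence (m : ℕ) (hm : 1 ≤ m)
    (P : BV m → Matrix (Fin m) (Fin m) (ZMod 2)) (hP : IsKerdockSet P)
    (a1s a2s bs : BV m) :
    (∀ c1 c2 : KCol m, c1 ≠ c2 →
      ¬(c1.2.1 = a2s ∧ c1.2.2 = bs) → ¬(c2.2.1 = a2s ∧ c2.2.2 = bs) →
      |∑ u ∈ Finset.univ.filter (fun u : KRow m => Matrix.vecMul u.1 (P bs) + u.2 ≠ a2s),
          kerdockEntry m P u c1 * kerdockEntry m P u c2| /
        (Real.sqrt (∑ u ∈ Finset.univ.filter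
            (fun u : KRow m => Matrix.vecMul u.1 (P bs) + u.2 ≠ a2s),
            (kerdockEntry m P u c1) ^ 2) *
          Real.sqrt (∑ u ∈ Finset.univ.filter
            (fun u : KRow m => Matrix.vecMul u.1 (P bs) + u.2 ≠ a2s),
            (kerdockEntry m P u c2) ^ 2))
        ≤ 1 / ((2 : ℝ) ^ m - 1)) ∧
    (∃ c1 c2 : KCol m, c1 ≠ c2 ∧
      ¬(c1.2.1 = a2s ∧ c1.2.2 = bs) ∧ ¬(c2.2.1 = a2s ∧ c2.2.2 = bs) ∧
      |∑ u ∈ Finset.univ.filter (fun u : KRow m => Matrix.vecMul u.1 (P bs) + u.2 ≠ a2s),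
          kerdockEntry m P u c1 * kerdockEntry m P u c2| /
        (Real.sqrt (∑ u ∈ Finset.univ.filter
            (fun u : KRow m => Matrix.vecMul u.1 (P bs) + u.2 ≠ a2s),
            (kerdockEntry m P u c1) ^ 2) *
          Real.sqrt (∑ u ∈ Finset.univ.filter
            (fun u : KRow m => Matrix.vecMul u.1 (P bs) + u.2 ≠ a2s),
            (kerdockEntry m P u c2) ^ 2))
        = 1 / ((2 : ℝ) ^ m - 1)) ∧
    1 / ((2 : ℝ) ^ m - 1)
      = 2 / (Real.sqrt (4 * ((2 : ℝ) ^ (2 * m) - 2 ^ m) + 1) - 1) := by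
  have h2m : (2 : ℝ) ≤ 2 ^ m := by
    calc (2 : ℝ) = 2 ^ 1 := (pow_one 2).symm
    _ ≤ 2 ^ m := pow_le_pow_right₀ one_le_two hm
  have h2mpos : (0 : ℝ) < 2 ^ m := by positivity
  have h2m1 : (0 : ℝ) < 2 ^ m - 1 := by linarith
  set K : ℝ := ((2 : ℝ) ^ m - 1) / 2 ^ m with hK
  have hKpos : 0 < K := by positivity
  have hK1 : K ≤ 1 := by
    rw [hK, div_le_one h2mpos]
    linarith
  -- the norm of any remaining column is at least K
  have normK : ∀ c : KCol m, ¬(c.2.1 = a2s ∧ c.2.2 = bs) →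
      K ≤ ∑ u ∈ Finset.univ.filter (fun u : KRow m => Matrix.vecMul u.1 (P bs) + u.2 ≠ a2s),
          (kerdockEntry m P u c) ^ 2 := by
    intro c hc
    rw [norm_sum_val P hP a2s bs c hc]
    by_cases hb : c.2.2 = bs
    · rw [if_pos hb]; exact hK1
    · rw [if_neg hb]
  refine ⟨?_, ?_, ?_⟩
  · -- coherence bound
    intro c1 c2 hne h1 h2
    rw [sum_reduce]
    have hnum : |((2 : ℝ) ^ m)⁻¹ * ∑ u1 ∈ TT P a2s bs c1 c2, chi u1 c1.1 * chi u1 c2.1|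
        ≤ ((2 : ℝ) ^ m)⁻¹ := by
      rw [abs_mul, abs_of_pos (by positivity : (0:ℝ) < ((2 : ℝ) ^ m)⁻¹)]
      calc ((2 : ℝ) ^ m)⁻¹ * |∑ u1 ∈ TT P a2s bs c1 c2, chi u1 c1.1 * chi u1 c2.1|
          ≤ ((2 : ℝ) ^ m)⁻¹ * 1 := by
            apply mul_le_mul_of_nonneg_left (inner_bound P hP a2s bs hne h1) (by positivity)
        _ = ((2 : ℝ) ^ m)⁻¹ := mul_one _
    have hden : K ≤ Real.sqrt (∑ u ∈ Finset.univ.filter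
          (fun u : KRow m => Matrix.vecMul u.1 (P bs) + u.2 ≠ a2s),
          (kerdockEntry m P u c1) ^ 2) *
        Real.sqrt (∑ u ∈ Finset.univ.filter
          (fun u : KRow m => Matrix.vecMul u.1 (P bs) + u.2 ≠ a2s),
          (kerdockEntry m P u c2) ^ 2) := by
      calc K = Real.sqrt K * Real.sqrt K := (Real.mul_self_sqrt hKpos.le).symm
        _ ≤ _ := by
            apply mul_le_mul (Real.sqrt_le_sqrt (normK c1 h1)) (Real.sqrt_le_sqrt (normK c2 h2))
              (Real.sqrt_nonneg _) (Real.sqrt_nonneg _)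
    calc |((2 : ℝ) ^ m)⁻¹ * ∑ u1 ∈ TT P a2s bs c1 c2, chi u1 c1.1 * chi u1 c2.1| /
          (Real.sqrt _ * Real.sqrt _)
        ≤ ((2 : ℝ) ^ m)⁻¹ / K := div_le_div₀ (by positivity) hnum hKpos hden
      _ = 1 / ((2 : ℝ) ^ m - 1) := by
          rw [hK]
          field_simp
  · -- attained
    have hFin : Nonempty (Fin m) := ⟨⟨0, hm⟩⟩
    set o : BV m := fun _ => 1 with ho
    have hone : o ≠ 0 := by
      intro h
      have := congrFun h (Classical.arbitrary (Fin m))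
      simp [ho] at this
    set b0 : BV m := bs + o with hb0
    have hb0ne : b0 ≠ bs := by
      intro h
      apply hone
      have : bs + o - bs = bs - bs := by rw [← hb0, h]
      simpa using this
    refine ⟨((0 : BV m), (0 : BV m), b0), (o, (0 : BV m), b0), ?_, ?_, ?_, ?_⟩
    · intro h
      exact hone (congrArg Prod.fst h).symm
    · simp only [not_and]
      intro _
      exact hb0ne
    · simp only [not_and]
      intro _
      exact hb0ne
    · set c1 : KCol m := ((0 : BV m), (0 : BV m), b0)
      set c2 : KCol m := (o, (0 : BV m), b0)
      have hcc : c1.2 = c2.2 := rfl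
      have hb : c1.2.2 ≠ bs := hb0ne
      have ha1 : c1.1 ≠ c2.1 := fun h => hone h.symm
      have hex := inner_exact P hP a2s bs hcc hb ha1
      rw [sum_reduce]
      have hn1 : (∑ u ∈ Finset.univ.filter
            (fun u : KRow m => Matrix.vecMul u.1 (P bs) + u.2 ≠ a2s),
            (kerdockEntry m P u c1) ^ 2) = ((2 : ℝ) ^ m - 1) / 2 ^ m := by
        rw [norm_sum_val P hP a2s bs c1 (by simp only [not_and]; intro _; exact hb0ne),
          if_neg hb]
      have hn2 : (∑ u ∈ Finset.univ.filter
            (fun u : KRow m => Matrix.vecMul u.1 (P bs) + u.2 ≠ a2s),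
            (kerdockEntry m P u c2) ^ 2) = ((2 : ℝ) ^ m - 1) / 2 ^ m := by
        rw [norm_sum_val P hP a2s bs c2 (by simp only [not_and]; intro _; exact hb0ne),
          if_neg (show ¬(c2.2.2 = bs) from hb0ne)]
      rw [hn1, hn2]
      rw [abs_mul, abs_of_pos (by positivity : (0:ℝ) < ((2 : ℝ) ^ m)⁻¹), hex, mul_one]
      rw [Real.mul_self_sqrt (by positivity : (0:ℝ) ≤ ((2:ℝ)^m - 1)/2^m)]
      rw [div_eq_div_iff (by positivity) h2m1.ne']
      field_simp
  · -- arithmetic identity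
    have hsq : 4 * ((2 : ℝ) ^ (2 * m) - 2 ^ m) + 1 = (2 * 2 ^ m - 1) ^ 2 := by
      rw [two_mul m, pow_add]
      ring
    rw [hsq, Real.sqrt_sq (by linarith : (0:ℝ) ≤ 2 * 2 ^ m - 1)]
    rw [show 2 * (2:ℝ) ^ m - 1 - 1 = 2 * (2 ^ m - 1) by ring]
    rw [div_eq_div_iff h2m1.ne' (by positivity : (2 * ((2:ℝ)^m - 1)) ≠ 0)]
    ring
end
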